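/- arXiv:1403.0460 — 2 statements merged into one kernel-verified Lean document; each statement's English description precedes it below -/
import Mathlib

section
/- Fix integers n ≥ 1, c ≥ 1 and m ∈ {0, …, c}. The bijection ζ_m : P^n(c)_m → T(c) × GL(c, ℂ), (A₁, A₂; C₁, …, C_n; e) ↦ ((B_m, E_m, e), A_{2m}), induces a bijection between the orbit set P^n(c)_m / (GL(c, ℂ) × GL(c, ℂ)) (for the action (φ₁, φ₂): A_i ↦ φ₂A_iφ₁^{-1}, C_j ↦ φ₁C_jφ₂^{-1}, e ↦ eφ₁^{-1}) and the orbit set T(c) / GL(c, ℂ) (for the action φ: b_i ↦ φb_iφ^{-1}, e ↦ eφ^{-1}). -/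
open Matrix

abbrev Mat (c : ℕ) := Matrix (Fin c) (Fin c) ℂ

noncomputable def cS (c : ℕ) (m : ℤ) : ℂ :=
  ((Real.cos (Real.pi * (m : ℝ) / ((c : ℝ) + 1)) : ℝ) : ℂ)

noncomputable def sS (c : ℕ) (m : ℤ) : ℂ :=
  ((Real.sin (Real.pi * (m : ℝ) / ((c : ℝ) + 1)) : ℝ) : ℂ)

noncomputable def A1M (c : ℕ) (m : ℤ) (A1 A2 : Mat c) : Mat c :=
  cS c m • A1 - sS c m • A2

noncomputable def A2M (c : ℕ) (m : ℤ) (A1 A2 : Mat c) : Mat c :=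
  sS c m • A1 + cS c m • A2

noncomputable def BM (c : ℕ) (m : ℤ) (A1 A2 : Mat c) : Mat c :=
  (A2M c m A1 A2)⁻¹ * A1M c m A1 A2

noncomputable def DM (n c : ℕ) (m : ℤ) (C : Fin n → Mat c) : Mat c :=
  ∑ q : Fin n, (((n - 1).choose q.val : ℂ) * cS c m ^ (n - 1 - q.val) * sS c m ^ q.val) • C q

noncomputable def EM (n c : ℕ) (m : ℤ) (A1 A2 : Mat c) (C : Fin n → Mat c) : Mat c :=
  DM n c m C * A2M c m A1 A2

/-- Condition (P1). -/
def CondP1 (n c : ℕ) (A1 A2 : Mat c) (C : Fin n → Mat c) : Prop :=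
  (∀ h : n = 1, A1 * C ⟨0, by omega⟩ * A2 = A2 * C ⟨0, by omega⟩ * A1) ∧
  ∀ q : ℕ, ∀ hq : q + 1 < n,
    A1 * C ⟨q, by omega⟩ = A2 * C ⟨q + 1, hq⟩ ∧
    C ⟨q, by omega⟩ * A1 = C ⟨q + 1, hq⟩ * A2

/-- Condition (P2). -/
def CondP2 (c : ℕ) (A1 A2 : Mat c) : Prop :=
  ∃ ν : ℂ × ℂ, ν ≠ 0 ∧ (ν.1 • A1 + ν.2 • A2).det ≠ 0

/-- Condition (P3), with `C1`, `Cn` the first and last of the `C` matrices. -/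
def CondP3 (n c : ℕ) (A1 A2 C1 Cn : Mat c) (e : Fin c → ℂ) : Prop :=
  ∀ l1 l2 m1 m2 : ℂ, (l1, l2) ≠ 0 → l1 ^ n * m1 + l2 ^ n * m2 = 0 →
    ∀ v : Fin c → ℂ,
      (l2 • A1 + l1 • A2).mulVec v = 0 →
      (C1 * A2 + m1 • 1).mulVec v = 0 →
      (Cn * A1 + ((-1 : ℂ) ^ (n - 1) * m2) • 1).mulVec v = 0 →
      e ⬝ᵥ v = 0 → v = 0

/-- Membership in `P^n(c)`: conditions (P1), (P2), (P3). -/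
def CondP (n c : ℕ) (hn : 0 < n) (A1 A2 : Mat c) (C : Fin n → Mat c) (e : Fin c → ℂ) : Prop :=
  CondP1 n c A1 A2 C ∧ CondP2 c A1 A2 ∧
    CondP3 n c A1 A2 (C ⟨0, hn⟩) (C ⟨n - 1, by omega⟩) e

/-- Condition (T2). -/
def CondT2 (c : ℕ) (b1 b2 : Mat c) (e : Fin c → ℂ) : Prop :=
  ∀ z w : ℂ, ∀ v : Fin c → ℂ,
    (b1 + z • 1).mulVec v = 0 → (b2 + w • 1).mulVec v = 0 → e ⬝ᵥ v = 0 → v = 0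

/-- ADHM data: conditions (T1) and (T2). -/
def ADHM (c : ℕ) (b1 b2 : Mat c) (e : Fin c → ℂ) : Prop :=
  b1 * b2 = b2 * b1 ∧ CondT2 c b1 b2 e

/-- Points of the subset `P^n(c)_m ⊂ P^n(c)` (where `A_{2m}` is invertible). -/
def PSubM (n c : ℕ) (hn : 0 < n) (m : ℕ) :=
  {t : Mat c × Mat c × (Fin n → Mat c) × (Fin c → ℂ) //
    CondP n c hn t.1 t.2.1 t.2.2.1 t.2.2.2 ∧ IsUnit (A2M c m t.1 t.2.1)}

/-- Points of `T(c)`. -/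
def TSubADHM (c : ℕ) := {b : Mat c × Mat c × (Fin c → ℂ) // ADHM c b.1 b.2.1 b.2.2}

/-- The orbit relation on `P^n(c)_m` for the GL(c,ℂ)×GL(c,ℂ) action. -/
def relP (n c : ℕ) (hn : 0 < n) (m : ℕ) : PSubM n c hn m → PSubM n c hn m → Prop :=
  fun t t' => ∃ φ1 φ2 : Mat c, IsUnit φ1 ∧ IsUnit φ2 ∧
    t'.1.1 = φ2 * t.1.1 * φ1⁻¹ ∧
    t'.1.2.1 = φ2 * t.1.2.1 * φ1⁻¹ ∧
    (∀ j, t'.1.2.2.1 j = φ1 * t.1.2.2.1 j * φ2⁻¹) ∧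
    t'.1.2.2.2 = Matrix.vecMul t.1.2.2.2 φ1⁻¹

/-- The orbit relation on `T(c)` for the GL(c,ℂ) action. -/
def relT (c : ℕ) : TSubADHM c → TSubADHM c → Prop :=
  fun b b' => ∃ φ : Mat c, IsUnit φ ∧
    b'.1.1 = φ * b.1.1 * φ⁻¹ ∧ b'.1.2.1 = φ * b.1.2.1 * φ⁻¹ ∧
    b'.1.2.2 = Matrix.vecMul b.1.2.2 φ⁻¹

/-! Normalising by `(φ₁, φ₂) = (1, A_{2m}⁻¹)` makes `A_{2m} = 1`, and then `A₁ = c_m B_m + s_m` and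
`A₂ = c_m - s_m B_m` are commuting polynomials in `B_m`. Since `c_m A₂ + s_m A₁ = 1`, expanding
`(c_m A₂ + s_m A₁)^(n-1) C_j` by the binomial theorem and sliding the powers along the chain
`A₁ C_q = A₂ C_{q+1}` of (P1) gives `C_j = A₂^(n-j) A₁^(j-1) D_m`. So a tuple is recovered, up to
the action, from `(B_m, E_m, e)`, and `ζ_m` has an inverse on orbits. The same chain identity,
applied to the vectors `C_q A_{2m} v` for a common eigenvector `v` of `B_m` and `E_m`, turns (P3)
into (T2); conversely (T2) gives (P3) for the inverse data. -/

section Chain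

variable {R M : Type*} [Monoid R] [MulAction R M] {X Y : R} {n : ℕ} {C : Fin n → M}

theorem pow_smul_eq_pow_smul_of_chain (hXY : Commute X Y)
    (hC : ∀ q (hq : q + 1 < n), Y • C ⟨q, by omega⟩ = X • C ⟨q + 1, hq⟩)
    {j k : Fin n} (hkj : k ≤ j) :
    X ^ (j - k : ℕ) • C j = Y ^ (j - k : ℕ) • C k := by
  obtain ⟨j, hj⟩ := j
  obtain ⟨k, hk⟩ := k
  simp only [Fin.mk_le_mk] at hkj
  obtain ⟨i, rfl⟩ := Nat.exists_eq_add_of_le hkj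
  simp only [Nat.add_sub_cancel_left]
  induction i with
  | zero => simp
  | succ i ih =>
    change X ^ (i + 1) • C ⟨k + i + 1, hj⟩ = _
    rw [pow_succ, mul_smul, ← hC (k + i) hj, ← mul_smul, (hXY.pow_left i).eq, mul_smul,
      ih (by omega) (by omega), ← mul_smul, ← pow_succ']

theorem pow_smul_pow_smul_comm_of_chain (hXY : Commute X Y)
    (hC : ∀ q (hq : q + 1 < n), Y • C ⟨q, by omega⟩ = X • C ⟨q + 1, hq⟩) (j k : Fin n) :
    X ^ (n - 1 - k : ℕ) • Y ^ (k : ℕ) • C j = X ^ (n - 1 - j : ℕ) • Y ^ (j : ℕ) • C k := by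
  wlog hkj : k ≤ j generalizing j k
  · exact (this k j (le_of_not_ge hkj)).symm
  have hsplit : n - 1 - k = (n - 1 - j) + (j - k) := by omega
  rw [hsplit, pow_add, mul_smul, ← mul_smul _ _ (C j), (hXY.pow_pow _ _).eq, mul_smul,
    pow_smul_eq_pow_smul_of_chain hXY hC hkj, ← mul_smul (Y ^ (k : ℕ)), ← pow_add,
    Nat.add_sub_cancel' (Fin.le_iff_val_le_val.mp hkj)]

end Chain

theorem Commute.add_smul_pow_smul_eq_sum {K R M : Type*} [CommSemiring K] [Semiring R]
    [Algebra K R] [AddCommMonoid M] [Module K M] [Module R M] [IsScalarTower K R M]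
    {X Y : R} (hXY : Commute X Y) (a b : K) {n : ℕ} (hn : 0 < n) (x : M) :
    (a • X + b • Y) ^ (n - 1) • x =
      ∑ k : Fin n, ((n - 1).choose k * a ^ (n - 1 - k : ℕ) * b ^ (k : ℕ) : K) •
        X ^ (n - 1 - k : ℕ) • Y ^ (k : ℕ) • x := by
  rw [add_comm, ((hXY.symm.smul_left b).smul_right a).add_pow, Nat.sub_add_cancel hn,
    Finset.sum_smul, ← Fin.sum_univ_eq_sum_range]
  refine Finset.sum_congr rfl fun k _ => ?_
  rw [smul_pow, smul_pow]
  simp only [mul_smul, smul_assoc, Nat.cast_smul_eq_nsmul]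
  rw [← mul_smul (X ^ _), (hXY.pow_pow _ _).eq, mul_smul]
  simp only [smul_comm _ ((n - 1).choose k), smul_comm (_ : R) (_ : K)]
  rw [smul_comm (b ^ (k : ℕ))]

theorem eq_pow_smul_pow_smul_sum_of_chain {K R M : Type*} [CommSemiring K] [Semiring R]
    [Algebra K R] [AddCommMonoid M] [Module K M] [Module R M] [IsScalarTower K R M]
    {X Y : R} (hXY : Commute X Y) {a b : K} (hab : a • X + b • Y = 1) {n : ℕ} {C : Fin n → M}
    (hC : ∀ q (hq : q + 1 < n), Y • C ⟨q, by omega⟩ = X • C ⟨q + 1, hq⟩) (j : Fin n) :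
    C j = X ^ (n - 1 - j : ℕ) • Y ^ (j : ℕ) •
      ∑ k : Fin n, ((n - 1).choose k * a ^ (n - 1 - k : ℕ) * b ^ (k : ℕ) : K) • C k := by
  calc C j = (a • X + b • Y) ^ (n - 1) • C j := by rw [hab, one_pow, one_smul]
    _ = ∑ k : Fin n, ((n - 1).choose k * a ^ (n - 1 - k : ℕ) * b ^ (k : ℕ) : K) •
          X ^ (n - 1 - k : ℕ) • Y ^ (k : ℕ) • C j := hXY.add_smul_pow_smul_eq_sum a b j.pos _
    _ = ∑ k : Fin n, ((n - 1).choose k * a ^ (n - 1 - k : ℕ) * b ^ (k : ℕ) : K) •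
          X ^ (n - 1 - j : ℕ) • Y ^ (j : ℕ) • C k := by
      simp only [pow_smul_pow_smul_comm_of_chain hXY hC j]
    _ = _ := by simp only [Finset.smul_sum, smul_comm _ (_ : K)]

theorem Matrix.pow_mulVec_of_mulVec_eq_smul {ι K : Type*} [Fintype ι] [DecidableEq ι] [CommRing K]
    {A : Matrix ι ι K} {v : ι → K} {α : K} (hAv : A *ᵥ v = α • v) (k : ℕ) :
    A ^ k *ᵥ v = α ^ k • v := by
  induction k with
  | zero => simp
  | succ k ih => rw [pow_succ, ← mulVec_mulVec, hAv, mulVec_smul, ih, smul_smul, pow_succ']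

theorem Matrix.add_smul_one_mulVec_eq_zero_of_mul_pow {ι K : Type*} [Fintype ι] [DecidableEq ι]
    [Field K] {A B : Matrix ι ι K} {v : ι → K} {α μ : K} (hα : α ≠ 0) (hAv : A *ᵥ v = α • v)
    {k : ℕ} (h : (B * A ^ k + μ • 1) *ᵥ v = 0) : (B + (μ / α ^ k) • 1) *ᵥ v = 0 := by
  rw [add_mulVec, ← mulVec_mulVec, pow_mulVec_of_mulVec_eq_smul hAv, mulVec_smul,
    smul_mulVec, one_mulVec] at h
  calc (B + (μ / α ^ k) • 1) *ᵥ v = (α ^ k)⁻¹ • (α ^ k • B *ᵥ v + μ • v) := by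
        rw [add_mulVec, smul_mulVec, one_mulVec, smul_add, inv_smul_smul₀ (pow_ne_zero k hα),
          div_eq_inv_mul, mul_smul]
    _ = 0 := by rw [h, smul_zero]

section Rotation

variable {n c : ℕ} (m : ℤ)

theorem cS_sq_add_sS_sq : cS c m ^ 2 + sS c m ^ 2 = 1 := by
  simp only [cS, sS, ← Complex.ofReal_pow, ← Complex.ofReal_add, Real.cos_sq_add_sin_sq,
    Complex.ofReal_one]

theorem cS_smul_A1M_add_sS_smul_A2M (A1 A2 : Mat c) :
    cS c m • A1M c m A1 A2 + sS c m • A2M c m A1 A2 = A1 := by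
  rw [A1M, A2M]
  match_scalars <;> first | ring1 | linear_combination cS_sq_add_sS_sq m

theorem cS_smul_A2M_sub_sS_smul_A1M (A1 A2 : Mat c) :
    cS c m • A2M c m A1 A2 - sS c m • A1M c m A1 A2 = A2 := by
  rw [A1M, A2M]
  match_scalars <;> first | ring1 | linear_combination cS_sq_add_sS_sq m

theorem A1M_mul_mul_A2M_comm {A1 A2 X : Mat c} (h : A1 * X * A2 = A2 * X * A1) :
    A1M c m A1 A2 * X * A2M c m A1 A2 = A2M c m A1 A2 * X * A1M c m A1 A2 := by
  simp only [A1M, A2M, sub_mul, add_mul, mul_add, mul_sub, smul_mul_assoc, mul_smul_comm, h]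
  module

theorem A1M_mul_DM_mul_A2M_comm {A1 A2 : Mat c} {C : Fin n → Mat c}
    (h : ∀ q, A1 * C q * A2 = A2 * C q * A1) :
    A1M c m A1 A2 * DM n c m C * A2M c m A1 A2 = A2M c m A1 A2 * DM n c m C * A1M c m A1 A2 := by
  simp only [DM, Finset.mul_sum, Finset.sum_mul, mul_smul_comm, smul_mul_assoc,
    A1M_mul_mul_A2M_comm m (h _)]

theorem A1M_conj (A1 A2 φ ψ : Mat c) :
    A1M c m (φ * A1 * ψ) (φ * A2 * ψ) = φ * A1M c m A1 A2 * ψ := by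
  simp only [A1M, mul_sub, sub_mul, mul_smul_comm, smul_mul_assoc]

theorem A2M_conj (A1 A2 φ ψ : Mat c) :
    A2M c m (φ * A1 * ψ) (φ * A2 * ψ) = φ * A2M c m A1 A2 * ψ := by
  simp only [A2M, mul_add, add_mul, mul_smul_comm, smul_mul_assoc]

theorem DM_conj (C : Fin n → Mat c) (φ ψ : Mat c) :
    DM n c m (fun j => φ * C j * ψ) = φ * DM n c m C * ψ := by
  simp only [DM, Finset.mul_sum, Finset.sum_mul, mul_smul_comm, smul_mul_assoc]

theorem BM_conj (A1 A2 : Mat c) {φ1 φ2 : Mat c} (h1 : IsUnit φ1) (h2 : IsUnit φ2) :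
    BM c m (φ2 * A1 * φ1⁻¹) (φ2 * A2 * φ1⁻¹) = φ1 * BM c m A1 A2 * φ1⁻¹ := by
  rw [BM, BM, A1M_conj, A2M_conj, Matrix.mul_inv_rev, Matrix.mul_inv_rev, nonsing_inv_nonsing_inv _
    ((isUnit_iff_isUnit_det _).mp h1)]
  simp only [Matrix.mul_assoc, nonsing_inv_mul_cancel_left _ _ ((isUnit_iff_isUnit_det _).mp h2)]

theorem EM_conj (A1 A2 : Mat c) (C : Fin n → Mat c) (φ1 : Mat c) {φ2 : Mat c} (h2 : IsUnit φ2) :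
    EM n c m (φ2 * A1 * φ1⁻¹) (φ2 * A2 * φ1⁻¹) (fun j => φ1 * C j * φ2⁻¹) =
      φ1 * EM n c m A1 A2 C * φ1⁻¹ := by
  rw [EM, EM, DM_conj, A2M_conj]
  simp only [Matrix.mul_assoc, nonsing_inv_mul_cancel_left _ _ ((isUnit_iff_isUnit_det _).mp h2)]

end Rotation

section Forward

variable {n c : ℕ} {m : ℤ} {A1 A2 : Mat c} {C : Fin n → Mat c}

theorem CondP1.mul_mul_comm (hP1 : CondP1 n c A1 A2 C) (q : Fin n) :
    A1 * C q * A2 = A2 * C q * A1 := by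
  obtain ⟨q, hq⟩ := q
  by_cases hlast : q + 1 < n
  · obtain ⟨h1, h2⟩ := hP1.2 q hlast
    rw [h1, Matrix.mul_assoc, ← h2, Matrix.mul_assoc]
  by_cases hn1 : n = 1
  · subst hn1
    obtain rfl : q = 0 := by omega
    exact hP1.1 rfl
  obtain ⟨h1, h2⟩ := hP1.2 (q - 1) (by omega)
  have hidx : (⟨q - 1 + 1, by omega⟩ : Fin n) = ⟨q, hq⟩ := Fin.ext (by simp; omega)
  rw [hidx] at h1 h2
  rw [Matrix.mul_assoc, ← h2, ← Matrix.mul_assoc, h1]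

theorem commute_BM_EM (hP1 : CondP1 n c A1 A2 C) (hU : IsUnit (A2M c m A1 A2)) :
    Commute (BM c m A1 A2) (EM n c m A1 A2 C) := by
  have hd := (isUnit_iff_isUnit_det _).mp hU
  have h := A1M_mul_DM_mul_A2M_comm m hP1.mul_mul_comm
  calc BM c m A1 A2 * EM n c m A1 A2 C
      = (A2M c m A1 A2)⁻¹ * (A1M c m A1 A2 * DM n c m C * A2M c m A1 A2) := by
        simp only [BM, EM, Matrix.mul_assoc]
    _ = DM n c m C * A1M c m A1 A2 := by
        rw [h, Matrix.mul_assoc, nonsing_inv_mul_cancel_left _ _ hd]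
    _ = EM n c m A1 A2 C * BM c m A1 A2 := by
        simp only [BM, EM, Matrix.mul_assoc, mul_nonsing_inv_cancel_left _ _ hd]

theorem mulVec_A1_A2_of_BM_add_smul_one (hU : IsUnit (A2M c m A1 A2)) {z : ℂ} {v : Fin c → ℂ}
    (hz : (BM c m A1 A2 + z • 1) *ᵥ v = 0) :
    A1 *ᵥ v = (sS c m - z * cS c m) • (A2M c m A1 A2 *ᵥ v) ∧
      A2 *ᵥ v = (cS c m + z * sS c m) • (A2M c m A1 A2 *ᵥ v) := by
  rw [add_mulVec, smul_mulVec, one_mulVec] at hz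
  have hA1Mv : A1M c m A1 A2 *ᵥ v = -z • (A2M c m A1 A2 *ᵥ v) := by
    rw [← mul_nonsing_inv_cancel_left (A := A2M c m A1 A2) (A1M c m A1 A2)
      ((isUnit_iff_isUnit_det _).mp hU), ← mulVec_mulVec, ← BM, eq_neg_of_add_eq_zero_left hz,
      neg_smul, mulVec_neg, mulVec_smul]
  constructor
  · conv_lhs => rw [← cS_smul_A1M_add_sS_smul_A2M m A1 A2]
    rw [add_mulVec, smul_mulVec, smul_mulVec, hA1Mv, smul_smul, ← add_smul]
    congr 1; ring
  · conv_lhs => rw [← cS_smul_A2M_sub_sS_smul_A1M m A1 A2]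
    rw [sub_mulVec, smul_mulVec, smul_mulVec, hA1Mv, smul_smul, ← sub_smul]
    congr 1; ring

theorem C_mulVec_A2M_mulVec_eq (hP1 : CondP1 n c A1 A2 C) {v : Fin c → ℂ} {α β w : ℂ}
    (hab : cS c m * β + sS c m * α = 1) (hA1v : A1 *ᵥ v = α • (A2M c m A1 A2 *ᵥ v))
    (hA2v : A2 *ᵥ v = β • (A2M c m A1 A2 *ᵥ v)) (hw : (EM n c m A1 A2 C + w • 1) *ᵥ v = 0)
    (j : Fin n) :
    C j *ᵥ (A2M c m A1 A2 *ᵥ v) = (β ^ (n - 1 - j : ℕ) * α ^ (j : ℕ) * -w) • v := by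
  have hchain : ∀ q (hq : q + 1 < n), α • (C ⟨q, by omega⟩ *ᵥ (A2M c m A1 A2 *ᵥ v)) =
      β • (C ⟨q + 1, hq⟩ *ᵥ (A2M c m A1 A2 *ᵥ v)) := fun q hq => by
    rw [← mulVec_smul, ← hA1v, ← mulVec_smul, ← hA2v, mulVec_mulVec, mulVec_mulVec,
      (hP1.2 q hq).2]
  have hsum : ∑ k : Fin n, (((n - 1).choose k : ℂ) * cS c m ^ (n - 1 - k : ℕ) *
      sS c m ^ (k : ℕ)) • (C k *ᵥ (A2M c m A1 A2 *ᵥ v)) = -w • v := by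
    rw [add_mulVec, smul_mulVec, one_mulVec, EM, ← mulVec_mulVec, DM, sum_mulVec] at hw
    simp only [smul_mulVec] at hw
    rw [eq_neg_of_add_eq_zero_left hw, neg_smul]
  rw [eq_pow_smul_pow_smul_sum_of_chain (C := fun k => C k *ᵥ (A2M c m A1 A2 *ᵥ v))
    (Commute.all β α) (a := cS c m) (b := sS c m) (by simpa only [smul_eq_mul]) hchain j, hsum]
  simp only [smul_smul, mul_assoc]

theorem condT2_BM_EM {hn : 0 < n} {e : Fin c → ℂ} (hP : CondP n c hn A1 A2 C e)
    (hU : IsUnit (A2M c m A1 A2)) : CondT2 c (BM c m A1 A2) (EM n c m A1 A2 C) e := by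
  intro z w v hz hw hev
  obtain ⟨hP1, -, hP3⟩ := hP
  obtain ⟨hA1v, hA2v⟩ := mulVec_A1_A2_of_BM_add_smul_one hU hz
  set l1 := z * cS c m - sS c m
  set l2 := cS c m + z * sS c m
  rw [← neg_sub] at hA1v
  have hab : cS c m * l2 + sS c m * -l1 = 1 := by
    linear_combination cS_sq_add_sS_sq (c := c) m
  have hC := C_mulVec_A2M_mulVec_eq hP1 hab hA1v hA2v hw
  have hpow : ∀ x : ℂ, x ^ n = x * x ^ (n - 1) := fun x => by
    rw [← pow_succ', Nat.sub_add_cancel hn]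
  refine hP3 l1 l2 (l2 ^ n * w) (-(l1 ^ n * w)) ?_ (by ring) v ?_ ?_ ?_ hev
  · intro h
    simp only [Prod.ext_iff, Prod.fst_zero, Prod.snd_zero] at h
    exact one_ne_zero (hab.symm.trans (by rw [h.1, h.2]; ring))
  · rw [add_mulVec, smul_mulVec, smul_mulVec, hA1v, hA2v, smul_smul, smul_smul, ← add_smul]
    exact smul_eq_zero_of_left (by ring) _
  · rw [add_mulVec, ← mulVec_mulVec, hA2v, mulVec_smul, smul_mulVec, one_mulVec, hC, smul_smul,
      ← add_smul]
    exact smul_eq_zero_of_left (by rw [Nat.sub_zero, hpow]; ring) _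
  · rw [add_mulVec, ← mulVec_mulVec, hA1v, mulVec_smul, smul_mulVec, one_mulVec, hC, smul_smul,
      ← add_smul]
    exact smul_eq_zero_of_left (by rw [Nat.sub_self, hpow l1, neg_pow l1]; ring) _

end Forward

section Inverse

/-- The inverse of `ζ_m` on data normalised by `A_{2m} = 1`: `(A₁, A₂)` is `(b₁, 1)` rotated back by
the angle `πm/(c+1)`, and `C_{j+1} = A₂^(n-1-j) A₁^j b₂`. -/
noncomputable def A1OfB (c : ℕ) (m : ℤ) (b : Mat c) : Mat c := cS c m • b + sS c m • 1

noncomputable def A2OfB (c : ℕ) (m : ℤ) (b : Mat c) : Mat c := cS c m • 1 - sS c m • b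

noncomputable def COfBE (n c : ℕ) (m : ℤ) (b1 b2 : Mat c) (j : Fin n) : Mat c :=
  A2OfB c m b1 ^ (n - 1 - j : ℕ) * (A1OfB c m b1 ^ (j : ℕ) * b2)

variable {n c : ℕ} {m : ℤ}

theorem A2M_A1OfB_A2OfB (b : Mat c) : A2M c m (A1OfB c m b) (A2OfB c m b) = 1 := by
  rw [A2M, A1OfB, A2OfB]
  match_scalars <;> first | ring1 | linear_combination cS_sq_add_sS_sq m

theorem A1M_A1OfB_A2OfB (b : Mat c) : A1M c m (A1OfB c m b) (A2OfB c m b) = b := by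
  rw [A1M, A1OfB, A2OfB]
  match_scalars <;> first | ring1 | linear_combination cS_sq_add_sS_sq m

theorem BM_A1OfB_A2OfB (b : Mat c) : BM c m (A1OfB c m b) (A2OfB c m b) = b := by
  rw [BM, A2M_A1OfB_A2OfB, A1M_A1OfB_A2OfB, inv_one, Matrix.one_mul]

theorem inv_A2M_mul_A1 {A1 A2 : Mat c} (hU : IsUnit (A2M c m A1 A2)) :
    (A2M c m A1 A2)⁻¹ * A1 = A1OfB c m (BM c m A1 A2) := by
  calc (A2M c m A1 A2)⁻¹ * A1
      = (A2M c m A1 A2)⁻¹ * (cS c m • A1M c m A1 A2 + sS c m • A2M c m A1 A2) := by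
        rw [cS_smul_A1M_add_sS_smul_A2M]
    _ = A1OfB c m (BM c m A1 A2) := by
      rw [mul_add, mul_smul_comm, mul_smul_comm,
        nonsing_inv_mul _ ((isUnit_iff_isUnit_det _).mp hU), A1OfB, BM]

theorem inv_A2M_mul_A2 {A1 A2 : Mat c} (hU : IsUnit (A2M c m A1 A2)) :
    (A2M c m A1 A2)⁻¹ * A2 = A2OfB c m (BM c m A1 A2) := by
  calc (A2M c m A1 A2)⁻¹ * A2
      = (A2M c m A1 A2)⁻¹ * (cS c m • A2M c m A1 A2 - sS c m • A1M c m A1 A2) := by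
        rw [cS_smul_A2M_sub_sS_smul_A1M]
    _ = A2OfB c m (BM c m A1 A2) := by
      rw [mul_sub, mul_smul_comm, mul_smul_comm,
        nonsing_inv_mul _ ((isUnit_iff_isUnit_det _).mp hU), A2OfB, BM]

theorem Commute.A1OfB {b x : Mat c} (h : Commute b x) : Commute (A1OfB c m b) x :=
  (h.smul_left _).add_left ((Commute.one_left x).smul_left _)

theorem Commute.A2OfB {b x : Mat c} (h : Commute b x) : Commute (A2OfB c m b) x :=
  ((Commute.one_left x).smul_left _).sub_left (h.smul_left _)

theorem commute_A2OfB_A1OfB (b : Mat c) : Commute (A2OfB c m b) (A1OfB c m b) :=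
  ((Commute.refl b).A1OfB.symm).A2OfB

theorem A1OfB_conj (b : Mat c) {φ : Mat c} (h : IsUnit φ) :
    A1OfB c m (φ * b * φ⁻¹) = φ * A1OfB c m b * φ⁻¹ := by
  simp only [A1OfB, mul_add, add_mul, mul_smul_comm, smul_mul_assoc, Matrix.mul_one,
    mul_nonsing_inv _ ((isUnit_iff_isUnit_det _).mp h)]

theorem A2OfB_conj (b : Mat c) {φ : Mat c} (h : IsUnit φ) :
    A2OfB c m (φ * b * φ⁻¹) = φ * A2OfB c m b * φ⁻¹ := by
  simp only [A2OfB, mul_sub, sub_mul, mul_smul_comm, smul_mul_assoc, Matrix.mul_one,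
    mul_nonsing_inv _ ((isUnit_iff_isUnit_det _).mp h)]

theorem COfBE_conj (b1 b2 : Mat c) {φ : Mat c} (h : IsUnit φ) (j : Fin n) :
    COfBE n c m (φ * b1 * φ⁻¹) (φ * b2 * φ⁻¹) j = φ * COfBE n c m b1 b2 j * φ⁻¹ := by
  have hconj_pow := Units.conj_pow h.unit
  simp only [IsUnit.unit_spec, Matrix.coe_units_inv] at hconj_pow
  rw [COfBE, COfBE, A1OfB_conj b1 h, A2OfB_conj b1 h, hconj_pow, hconj_pow]
  simp only [Matrix.mul_assoc, nonsing_inv_mul_cancel_left _ _ ((isUnit_iff_isUnit_det _).mp h)]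

theorem DM_COfBE (hn : 0 < n) {b1 b2 : Mat c} : DM n c m (COfBE n c m b1 b2) = b2 := by
  rw [DM]
  simp only [COfBE, ← smul_eq_mul (a := A2OfB c m b1 ^ _), ← smul_eq_mul (a := A1OfB c m b1 ^ _),
    ← (commute_A2OfB_A1OfB b1).add_smul_pow_smul_eq_sum _ _ hn]
  rw [add_comm, ← A2M, A2M_A1OfB_A2OfB, one_pow, one_smul]

theorem EM_A1OfB_A2OfB_COfBE (hn : 0 < n) {b1 b2 : Mat c} :
    EM n c m (A1OfB c m b1) (A2OfB c m b1) (COfBE n c m b1 b2) = b2 := by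
  rw [EM, A2M_A1OfB_A2OfB, Matrix.mul_one, DM_COfBE hn]

theorem COfBE_BM_EM {A1 A2 : Mat c} {C : Fin n → Mat c} (hP1 : CondP1 n c A1 A2 C)
    (hU : IsUnit (A2M c m A1 A2)) (j : Fin n) :
    COfBE n c m (BM c m A1 A2) (EM n c m A1 A2 C) j = C j * A2M c m A1 A2 := by
  have hd := (isUnit_iff_isUnit_det _).mp hU
  have hab : cS c m • ((A2M c m A1 A2)⁻¹ * A2) + sS c m • ((A2M c m A1 A2)⁻¹ * A1) = 1 := by
    rw [← mul_smul_comm, ← mul_smul_comm, ← mul_add, add_comm, ← A2M, nonsing_inv_mul _ hd]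
  have hchain : ∀ q (hq : q + 1 < n), ((A2M c m A1 A2)⁻¹ * A1) • C ⟨q, by omega⟩ =
      ((A2M c m A1 A2)⁻¹ * A2) • C ⟨q + 1, hq⟩ := fun q hq => by
    simp only [smul_eq_mul, Matrix.mul_assoc, (hP1.2 q hq).1]
  have hXY : Commute ((A2M c m A1 A2)⁻¹ * A2) ((A2M c m A1 A2)⁻¹ * A1) := by
    rw [inv_A2M_mul_A1 hU, inv_A2M_mul_A2 hU]
    exact commute_A2OfB_A1OfB _
  rw [eq_pow_smul_pow_smul_sum_of_chain hXY hab hchain j, COfBE, EM, ← inv_A2M_mul_A1 hU,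
    ← inv_A2M_mul_A2 hU, DM]
  simp only [smul_eq_mul, Matrix.mul_assoc]

theorem condP1_A1OfB_A2OfB_COfBE {b1 b2 : Mat c} (hb : Commute b1 b2) :
    CondP1 n c (A1OfB c m b1) (A2OfB c m b1) (COfBE n c m b1 b2) := by
  have hXY : Commute (A2OfB c m b1) (A1OfB c m b1) := commute_A2OfB_A1OfB b1
  have hYC : ∀ j, Commute (A1OfB c m b1) (COfBE n c m b1 b2 j) := fun j =>
    (hXY.symm.pow_right _).mul_right (((Commute.refl _).pow_right _).mul_right hb.A1OfB)
  have hXC : ∀ j, Commute (A2OfB c m b1) (COfBE n c m b1 b2 j) := fun j =>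
    ((Commute.refl _).pow_right _).mul_right ((hXY.pow_right _).mul_right hb.A2OfB)
  have hchain : ∀ q (hq : q + 1 < n), A1OfB c m b1 * COfBE n c m b1 b2 ⟨q, by omega⟩ =
      A2OfB c m b1 * COfBE n c m b1 b2 ⟨q + 1, hq⟩ := by
    intro q hq
    have hsplit : n - 1 - q = n - 1 - (q + 1) + 1 := by omega
    simp only [COfBE, hsplit, pow_succ', ← Matrix.mul_assoc]
    rw [hXY.symm.eq, Matrix.mul_assoc (A2OfB c m b1) (A1OfB c m b1),
      (hXY.symm.pow_right _).eq, ← Matrix.mul_assoc]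
  refine ⟨fun _ => ?_, fun q hq => ⟨hchain q hq, ?_⟩⟩
  · rw [Matrix.mul_assoc, ← (hXC _).eq, ← Matrix.mul_assoc, hXY.symm.eq, Matrix.mul_assoc,
      (hYC _).eq, Matrix.mul_assoc]
  · rw [← (hYC _).eq, hchain q hq, (hXC _).eq]

theorem condP2_A1OfB_A2OfB (b : Mat c) : CondP2 c (A1OfB c m b) (A2OfB c m b) := by
  refine ⟨(sS c m, cS c m), fun h => ?_, ?_⟩
  · simp only [Prod.ext_iff, Prod.fst_zero, Prod.snd_zero] at h
    simpa [h.1, h.2] using cS_sq_add_sS_sq (c := c) m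
  · rw [show sS c m • A1OfB c m b + cS c m • A2OfB c m b = 1 from A2M_A1OfB_A2OfB b, det_one]
    exact one_ne_zero

theorem COfBE_first_mul_A2OfB (hn : 0 < n) {b1 b2 : Mat c} (hb : Commute b1 b2) :
    COfBE n c m b1 b2 ⟨0, hn⟩ * A2OfB c m b1 = b2 * A2OfB c m b1 ^ n := by
  rw [COfBE, pow_zero, Matrix.one_mul, Matrix.mul_assoc, ← hb.A2OfB.eq, ← Matrix.mul_assoc,
    ← pow_succ, Nat.sub_zero, Nat.sub_add_cancel hn, (hb.A2OfB.pow_left n).eq]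

theorem COfBE_last_mul_A1OfB (hn : 0 < n) {b1 b2 : Mat c} (hb : Commute b1 b2) :
    COfBE n c m b1 b2 ⟨n - 1, by omega⟩ * A1OfB c m b1 = b2 * A1OfB c m b1 ^ n := by
  rw [COfBE, Nat.sub_self, pow_zero, Matrix.one_mul, Matrix.mul_assoc, ← hb.A1OfB.eq,
    ← Matrix.mul_assoc, ← pow_succ, Nat.sub_add_cancel hn, (hb.A1OfB.pow_left n).eq]

theorem exists_eigen_of_smul_A1OfB_add_smul_A2OfB {b : Mat c} {v : Fin c → ℂ} {l1 l2 : ℂ}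
    (hne : (l1, l2) ≠ 0) (hv : (l2 • A1OfB c m b + l1 • A2OfB c m b) *ᵥ v = 0) (hv0 : v ≠ 0) :
    ∃ z α1 α2 : ℂ, (b + z • 1) *ᵥ v = 0 ∧ A1OfB c m b *ᵥ v = α1 • v ∧
      A2OfB c m b *ᵥ v = α2 • v ∧ (α1 ≠ 0 ∨ α2 ≠ 0) := by
  have hcs := cS_sq_add_sS_sq (c := c) m
  obtain ⟨p, hp⟩ : ∃ p, p = l2 * cS c m - l1 * sS c m := ⟨_, rfl⟩
  obtain ⟨q, hq⟩ : ∃ q, q = l2 * sS c m + l1 * cS c m := ⟨_, rfl⟩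
  have hpq : l2 • A1OfB c m b + l1 • A2OfB c m b = p • b + q • 1 := by
    rw [A1OfB, A2OfB, hp, hq]
    match_scalars <;> ring
  rw [hpq, add_mulVec, smul_mulVec, smul_mulVec, one_mulVec] at hv
  have hp0 : p ≠ 0 := by
    rintro rfl
    rw [zero_smul, zero_add, smul_eq_zero] at hv
    refine hne (Prod.ext ?_ ?_) <;> simp only [Prod.fst_zero, Prod.snd_zero]
    · linear_combination -cS c m * hq + sS c m * hp - l1 * hcs + cS c m * (hv.resolve_right hv0)
    · linear_combination -sS c m * hq - cS c m * hp - l2 * hcs + sS c m * (hv.resolve_right hv0)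
  set z := q / p
  have hpz : p * z = q := mul_div_cancel₀ q hp0
  have hbv : b *ᵥ v = -z • v := by
    rw [neg_smul, eq_neg_iff_add_eq_zero, ← (smul_right_injective _ hp0).eq_iff, smul_add,
      smul_zero, smul_smul, hpz, hv]
  refine ⟨z, sS c m - cS c m * z, cS c m + sS c m * z, ?_, ?_, ?_, ?_⟩
  · rw [add_mulVec, smul_mulVec, one_mulVec, hbv, neg_smul, neg_add_cancel]
  · rw [A1OfB, add_mulVec, smul_mulVec, smul_mulVec, one_mulVec, hbv, smul_smul, ← add_smul]
    congr 1; ring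
  · rw [A2OfB, sub_mulVec, smul_mulVec, smul_mulVec, one_mulVec, hbv, smul_smul, ← sub_smul]
    congr 1; ring
  · by_contra! h
    refine hne (Prod.ext ?_ ?_) <;> simp only [Prod.fst_zero, Prod.snd_zero]
    · linear_combination -p * h.1 + sS c m * hp - cS c m * hq - l1 * hcs - cS c m * hpz
    · linear_combination p * h.2 - sS c m * hpz - cS c m * hp - sS c m * hq - l2 * hcs

theorem condP3_A1OfB_A2OfB_COfBE (hn : 0 < n) {b1 b2 : Mat c} {e : Fin c → ℂ}
    (hb : Commute b1 b2) (hT2 : CondT2 c b1 b2 e) :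
    CondP3 n c (A1OfB c m b1) (A2OfB c m b1) (COfBE n c m b1 b2 ⟨0, hn⟩)
      (COfBE n c m b1 b2 ⟨n - 1, by omega⟩) e := by
  intro l1 l2 μ1 μ2 hne _ v hv1 hv2 hv3 hev
  by_contra hv0
  obtain ⟨z, α1, α2, hz, hA1v, hA2v, hα⟩ := exists_eigen_of_smul_A1OfB_add_smul_A2OfB hne hv1 hv0
  rw [COfBE_last_mul_A1OfB hn hb] at hv3
  rw [COfBE_first_mul_A2OfB hn hb] at hv2
  rcases hα with hα1 | hα2
  · exact hv0 (hT2 z _ v hz (add_smul_one_mulVec_eq_zero_of_mul_pow hα1 hA1v hv3) hev)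
  · exact hv0 (hT2 z _ v hz (add_smul_one_mulVec_eq_zero_of_mul_pow hα2 hA2v hv2) hev)

end Inverse

theorem Quot.map_bijective_of_inverse {α β : Type*} {r : α → α → Prop} {s : β → β → Prop}
    (f : α → β) (g : β → α) (hf : ∀ a a', r a a' → s (f a) (f a'))
    (hg : ∀ b b', s b b' → r (g b) (g b'))
    (hgf : ∀ a, Quot.mk r (g (f a)) = Quot.mk r a) (hfg : ∀ b, Quot.mk s (f (g b)) = Quot.mk s b) :
    Function.Bijective (Quot.map f hf) := by
  refine Function.bijective_iff_has_inverse.mpr ⟨Quot.map g hg, ?_, ?_⟩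
  · rintro ⟨a⟩; exact hgf a
  · rintro ⟨b⟩; exact hfg b

namespace PSubM

variable {n c : ℕ} {hn : 0 < n} {m : ℕ}

noncomputable def zeta (t : PSubM n c hn m) : TSubADHM c :=
  ⟨(BM c m t.1.1 t.1.2.1, EM n c m t.1.1 t.1.2.1 t.1.2.2.1, t.1.2.2.2),
    commute_BM_EM t.2.1.1 t.2.2, condT2_BM_EM t.2.1 t.2.2⟩

theorem relT_zeta {t t' : PSubM n c hn m} (h : relP n c hn m t t') : relT c t.zeta t'.zeta := by
  obtain ⟨⟨A1, A2, C, e⟩, hP, hU⟩ := t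
  obtain ⟨⟨A1', A2', C', e'⟩, hP', hU'⟩ := t'
  obtain ⟨φ1, φ2, h1, h2, rfl, rfl, hC, rfl⟩ := h
  obtain rfl : C' = fun j => φ1 * C j * φ2⁻¹ := funext hC
  exact ⟨φ1, h1, BM_conj _ A1 A2 h1 h2, EM_conj _ A1 A2 C φ1 h2, rfl⟩

end PSubM

namespace TSubADHM

variable {n c : ℕ} {hn : 0 < n} {m : ℕ}

noncomputable def zetaInv (b : TSubADHM c) : PSubM n c hn m :=
  ⟨(A1OfB c m b.1.1, A2OfB c m b.1.1, COfBE n c m b.1.1 b.1.2.1, b.1.2.2),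
    ⟨condP1_A1OfB_A2OfB_COfBE b.2.1, condP2_A1OfB_A2OfB _,
      condP3_A1OfB_A2OfB_COfBE hn b.2.1 b.2.2⟩,
    by rw [A2M_A1OfB_A2OfB]; exact isUnit_one⟩

theorem relP_zetaInv {b b' : TSubADHM c} (h : relT c b b') :
    relP n c hn m (zetaInv b) (zetaInv b') := by
  obtain ⟨⟨b1, b2, e⟩, hb⟩ := b
  obtain ⟨⟨b1', b2', e'⟩, hb'⟩ := b'
  obtain ⟨φ, hφ, rfl, rfl, rfl⟩ := h
  exact ⟨φ, φ, hφ, hφ, A1OfB_conj b1 hφ, A2OfB_conj b1 hφ, COfBE_conj b1 b2 hφ, rfl⟩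

theorem zeta_zetaInv (b : TSubADHM c) : (zetaInv b : PSubM n c hn m).zeta = b := by
  obtain ⟨⟨b1, b2, e⟩, hb⟩ := b
  exact Subtype.ext (Prod.ext (BM_A1OfB_A2OfB b1) (Prod.ext (EM_A1OfB_A2OfB_COfBE hn) rfl))

end TSubADHM

theorem PSubM.relP_zetaInv_zeta {n c : ℕ} {hn : 0 < n} {m : ℕ} (t : PSubM n c hn m) :
    relP n c hn m t t.zeta.zetaInv := by
  obtain ⟨⟨A1, A2, C, e⟩, hP, hU⟩ := t
  refine ⟨1, (A2M c m A1 A2)⁻¹, isUnit_one, isUnit_nonsing_inv_iff.mpr hU, ?_, ?_, ?_, ?_⟩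
  · change A1OfB c m (BM c m A1 A2) = _
    rw [inv_one, Matrix.mul_one, inv_A2M_mul_A1 hU]
  · change A2OfB c m (BM c m A1 A2) = _
    rw [inv_one, Matrix.mul_one, inv_A2M_mul_A2 hU]
  · intro j
    change COfBE n c m (BM c m A1 A2) (EM n c m A1 A2 C) j = _
    rw [Matrix.one_mul, nonsing_inv_nonsing_inv _ ((isUnit_iff_isUnit_det _).mp hU),
      COfBE_BM_EM hP.1 hU]
  · exact (vecMul_one e).symm.trans (congrArg _ inv_one.symm)

theorem stmt2_general (n c : ℕ) (hn : 0 < n) (m : ℕ) :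
    ∃ g : PSubM n c hn m → TSubADHM c,
      (∀ t, (g t).1 =
        (BM c m t.1.1 t.1.2.1, EM n c m t.1.1 t.1.2.1 t.1.2.2.1, t.1.2.2.2)) ∧
      ∃ f : Quot (relP n c hn m) → Quot (relT c),
        Function.Bijective f ∧
        ∀ t, f (Quot.mk (relP n c hn m) t) = Quot.mk (relT c) (g t) := by
  refine ⟨PSubM.zeta, fun _ => rfl, Quot.map PSubM.zeta fun _ _ => PSubM.relT_zeta, ?_,
    fun _ => by rfl⟩
  refine Quot.map_bijective_of_inverse PSubM.zeta TSubADHM.zetaInv _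
    (fun _ _ => TSubADHM.relP_zetaInv) (fun t => (Quot.sound t.relP_zetaInv_zeta).symm) ?_
  intro b
  rw [TSubADHM.zeta_zetaInv]

/-- ζ_m induces a bijection between the orbit sets
P^n(c)_m / (GL(c,ℂ)×GL(c,ℂ)) and T(c) / GL(c,ℂ). -/
theorem stmt2 (n c : ℕ) (hn : 0 < n) (hc : 0 < c) (m : ℕ) (hm : m ≤ c) :
    ∃ g : PSubM n c hn m → TSubADHM c,
      (∀ t, (g t).1 =
        (BM c m t.1.1 t.1.2.1, EM n c m t.1.1 t.1.2.1 t.1.2.2.1, t.1.2.2.2)) ∧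
      ∃ f : Quot (relP n c hn m) → Quot (relT c),
        Function.Bijective f ∧
        ∀ t, f (Quot.mk (relP n c hn m) t) = Quot.mk (relT c) (g t) :=
  stmt2_general n c hn m
end

section
/- Fix an integer c ≥ 1 and let A₁, A₂ ∈ M_c(ℂ). For any integers m, l, if both A_{2m} and A_{2l} are invertible, then the matrix c_{m−l}·1 − s_{m−l} B_m is invertible and B_l = (c_{m−l}·1 − s_{m−l} B_m)^{-1}(s_{m−l}·1 + c_{m−l} B_m). -/
open Matrix

/-!
Changing the index from `m` to `l` rotates the pair `(A_{1m}, A_{2m})` by the angle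
`π(m - l)/(c + 1)`. Factoring `A_{2m}` out on the left, `A_{2l} = A_{2m}(c_{m-l} - s_{m-l} B_m)`
and `A_{1l} = A_{2m}(s_{m-l} + c_{m-l} B_m)`, and the inverse of `A_{2m}` cancels in
`B_l = A_{2l}⁻¹ A_{1l}`.
-/

theorem Matrix.isUnit_and_inv_mul_eq_of_mul_left {n R : Type*} [Fintype n] [DecidableEq n]
    [CommRing R] {P X Y : Matrix n n R} (hP : IsUnit P) (hPX : IsUnit (P * X)) :
    IsUnit X ∧ (P * X)⁻¹ * (P * Y) = X⁻¹ * Y := by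
  refine ⟨?_, ?_⟩
  · rw [isUnit_iff_isUnit_det, det_mul] at hPX
    exact (isUnit_iff_isUnit_det X).mpr (isUnit_of_mul_isUnit_right hPX)
  · rw [mul_inv_rev, Matrix.mul_assoc,
      nonsing_inv_mul_cancel_left _ _ ((isUnit_iff_isUnit_det P).mp hP)]

lemma cS_sub (c : ℕ) (m k : ℤ) : cS c (m - k) = cS c m * cS c k + sS c m * sS c k := by
  simp only [cS, sS, Int.cast_sub, mul_sub, sub_div, Real.cos_sub]
  push_cast
  ring

lemma sS_sub (c : ℕ) (m k : ℤ) : sS c (m - k) = sS c m * cS c k - cS c m * sS c k := by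
  simp only [cS, sS, Int.cast_sub, mul_sub, sub_div, Real.sin_sub]
  push_cast
  ring

lemma A1M_sub (c : ℕ) (m k : ℤ) (A1 A2 : Mat c) :
    A1M c (m - k) A1 A2 = cS c k • A1M c m A1 A2 + sS c k • A2M c m A1 A2 := by
  simp only [A1M, A2M, cS_sub, sS_sub]
  module

lemma A2M_sub (c : ℕ) (m k : ℤ) (A1 A2 : Mat c) :
    A2M c (m - k) A1 A2 = cS c k • A2M c m A1 A2 - sS c k • A1M c m A1 A2 := by
  simp only [A1M, A2M, cS_sub, sS_sub]
  module

lemma A2M_mul_BM {c : ℕ} {m : ℤ} {A1 A2 : Mat c} (hm : IsUnit (A2M c m A1 A2)) :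
    A2M c m A1 A2 * BM c m A1 A2 = A1M c m A1 A2 :=
  mul_nonsing_inv_cancel_left _ _ ((isUnit_iff_isUnit_det _).mp hm)

lemma A1M_sub_eq_A2M_mul {c : ℕ} {m : ℤ} {A1 A2 : Mat c} (hm : IsUnit (A2M c m A1 A2)) (k : ℤ) :
    A1M c (m - k) A1 A2 = A2M c m A1 A2 * (sS c k • (1 : Mat c) + cS c k • BM c m A1 A2) := by
  rw [A1M_sub, Matrix.mul_add, Matrix.mul_smul, Matrix.mul_smul, Matrix.mul_one, A2M_mul_BM hm,
    add_comm]

lemma A2M_sub_eq_A2M_mul {c : ℕ} {m : ℤ} {A1 A2 : Mat c} (hm : IsUnit (A2M c m A1 A2)) (k : ℤ) :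
    A2M c (m - k) A1 A2 = A2M c m A1 A2 * (cS c k • (1 : Mat c) - sS c k • BM c m A1 A2) := by
  rw [A2M_sub, Matrix.mul_sub, Matrix.mul_smul, Matrix.mul_smul, Matrix.mul_one, A2M_mul_BM hm]

theorem stmt10_general (c : ℕ) (A1 A2 : Mat c) (m l : ℤ)
    (hm : IsUnit (A2M c m A1 A2)) (hl : IsUnit (A2M c l A1 A2)) :
    IsUnit (cS c (m - l) • (1 : Mat c) - sS c (m - l) • BM c m A1 A2) ∧
    BM c l A1 A2 =
      (cS c (m - l) • (1 : Mat c) - sS c (m - l) • BM c m A1 A2)⁻¹ *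
        (sS c (m - l) • (1 : Mat c) + cS c (m - l) • BM c m A1 A2) := by
  have hl_eq : l = m - (m - l) := (sub_sub_cancel m l).symm
  rw [hl_eq, A2M_sub_eq_A2M_mul hm] at hl
  obtain ⟨hunit, hquot⟩ := Matrix.isUnit_and_inv_mul_eq_of_mul_left
    (Y := sS c (m - l) • (1 : Mat c) + cS c (m - l) • BM c m A1 A2) hm hl
  refine ⟨hunit, ?_⟩
  rw [BM, ← hquot, ← A1M_sub_eq_A2M_mul hm, ← A2M_sub_eq_A2M_mul hm, ← hl_eq]

/-- if A_{2m} and A_{2l} are invertible, then c_{m−l}·1 − s_{m−l}B_m is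
invertible and B_l = (c_{m−l}·1 − s_{m−l}B_m)⁻¹(s_{m−l}·1 + c_{m−l}B_m). -/
theorem stmt10 (c : ℕ) (hc : 0 < c) (A1 A2 : Mat c) (m l : ℤ)
    (hm : IsUnit (A2M c m A1 A2)) (hl : IsUnit (A2M c l A1 A2)) :
    IsUnit (cS c (m - l) • (1 : Mat c) - sS c (m - l) • BM c m A1 A2) ∧
    BM c l A1 A2 =
      (cS c (m - l) • (1 : Mat c) - sS c (m - l) • BM c m A1 A2)⁻¹ *
        (sS c (m - l) • (1 : Mat c) + cS c (m - l) • BM c m A1 A2) :=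
  stmt10_general c A1 A2 m l hm hl
end
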